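/- For nonnegative integers n,k, ∑_{π ∈ P(n,k)} w^{rlmin(π)} q^{inv(π)} = [n choose k]_q · [n]_{w,q}[n-1]_{w,q}⋯[k+1]_{w,q}, where [m]_{w,q} = w + q + q² + ⋯ + q^{m-1}. -/

import Mathlib

namespace PP

def isPP {n : ℕ} (M : Fin n → Fin n → Bool) : Prop :=
  (∀ i j j', M i j = true → M i j' = true → j = j') ∧
  (∀ i i' j, M i j = true → M i' j = true → i = i')

def zeroRows {n : ℕ} (M : Fin n → Fin n → Bool) : ℕ :=
  (Finset.univ.filter (fun i : Fin n => ∀ j, M i j = false)).card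

def invStat {n : ℕ} (M : Fin n → Fin n → Bool) : ℕ :=
  (Finset.univ.filter (fun p : Fin n × Fin n =>
    M p.1 p.2 = false ∧ (∀ j' < p.2, M p.1 j' = false) ∧ (∀ i' < p.1, M i' p.2 = false) ∧
    ((∃ j', M p.1 j' = true) ∨ (∃ i', M i' p.2 = true)))).card

def rlminStat {n : ℕ} (M : Fin n → Fin n → Bool) : ℕ :=
  (Finset.univ.filter (fun p : Fin n × Fin n =>
    M p.1 p.2 = true ∧ ∀ l < p.2, ∃ i' < p.1, M i' l = true)).card

def excStat {n : ℕ} (M : Fin n → Fin n → Bool) : ℕ :=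
  (Finset.univ.filter (fun p : Fin n × Fin n => M p.1 p.2 = true ∧ p.1 < p.2)).card

def wexStat {n : ℕ} (M : Fin n → Fin n → Bool) : ℕ :=
  (Finset.univ.filter (fun p : Fin n × Fin n => M p.1 p.2 = true ∧ p.1 ≤ p.2)).card

def reachN {n : ℕ} (M : Fin n → Fin n → Bool) : ℕ → Fin n → Fin n → Prop
  | 0, i, j => i = j
  | m+1, i, j => ∃ l, M i l = true ∧ reachN M m l j

noncomputable def cycStat {n : ℕ} (M : Fin n → Fin n → Bool) : ℕ :=
  Nat.card {i : Fin n // (∃ m, 0 < m ∧ reachN M m i i) ∧ ∀ j, (∃ m, reachN M m i j) → j ≤ i}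

def fixStat {n : ℕ} (M : Fin n → Fin n → Bool) : ℕ :=
  (Finset.univ.filter (fun i : Fin n => M i i = true)).card

noncomputable def cycGe2Stat {n : ℕ} (M : Fin n → Fin n → Bool) : ℕ :=
  Nat.card {i : Fin n // (∃ m, 0 < m ∧ reachN M m i i) ∧ (∀ j, (∃ m, reachN M m i j) → j ≤ i) ∧ M i i = false}

def Conn {n : ℕ} (M : Fin n → Fin n → Bool) : Prop :=
  ∀ i : ℕ, 0 < i → i < n → ∃ r : Fin n, r.1 < i ∧ ∀ c : Fin n, c.1 < i → M r c = false

def UpDownFrom {n : ℕ} (M : Fin n → Fin n → Bool) (i : Fin n) : Prop :=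
  ∀ (m : ℕ) (a b : Fin n),
    (∀ m', 1 ≤ m' → m' ≤ m + 1 → ¬ reachN M m' i i) →
    reachN M m i a → M a b = true →
    ((Even m → a < b) ∧ (¬ Even m → b < a))

def CUD {n : ℕ} (M : Fin n → Fin n → Bool) : Prop :=
  (∀ i : Fin n,
      ((∃ m, 0 < m ∧ reachN M m i i) ∧ ∀ j, (∃ m, reachN M m i j) → i ≤ j) →
      UpDownFrom M i) ∧
  (∀ i : Fin n, (∀ i', M i' i = false) → UpDownFrom M i)

def desStat {n : ℕ} (M : Fin n → Fin n → Bool) : ℕ :=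
  (Finset.univ.filter (fun p : Fin n × Fin n =>
      M p.1 p.2 = true ∧ ∃ h : p.1.1 + 1 < n, ∃ b : Fin n, M ⟨p.1.1 + 1, h⟩ b = true ∧ b < p.2)).card
  + (Finset.univ.filter (fun p : Fin n =>
      (∀ j, M p j = false) ∧ ∃ _h : 0 < p.1, ∃ a j : Fin n,
        M ⟨p.1 - 1, Nat.lt_of_le_of_lt (Nat.sub_le _ _) p.isLt⟩ a = true ∧
        (∀ i, M i j = false) ∧
        (Finset.univ.filter (fun m : Fin n => (∀ i, M i m = false) ∧ m < j)).card
          = (Finset.univ.filter (fun r : Fin n => (∀ c, M r c = false) ∧ r < p)).card ∧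
        j < a)).card

def gbinom {R : Type*} [CommRing R] (q : R) : ℕ → ℕ → R
  | _, 0 => 1
  | 0, _+1 => 0
  | n+1, k+1 => gbinom q n k + q ^ (k+1) * gbinom q n (k+1)

end PP


noncomputable def w4 : MvPolynomial (Fin 2) ℤ := MvPolynomial.X 0
noncomputable def q4 : MvPolynomial (Fin 2) ℤ := MvPolynomial.X 1

/-- `[m]_{w,q} = w + q + ⋯ + q^{m-1}`, with `[0]_{w,q} = 0`. -/
noncomputable def wqNum (m : ℕ) : MvPolynomial (Fin 2) ℤ :=
  if m = 0 then 0 else w4 + ∑ i ∈ Finset.Ico 1 m, q4 ^ i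

/-!
Work with `r × n` partial permutation matrices and build them row by row from the top. Appending
a zero row at the bottom changes neither statistic. Appending a row with its `1` in a free column
`c` creates one inversion in column `c` for every zero row above it (whose cell in column `c` now
sees a `1` below) and one in the new row for every free column left of `c`; the new `1` is a
right-to-left minimum exactly when no free column lies left of `c`. So the free columns, taken
from left to right, contribute `q ^ k * w, q ^ k * q, q ^ k * q ^ 2, …`, and there are
`n - (r - k)` of them, which turns the `q`-Pascal recurrence of the Gaussian binomial into the
claimed product formula.
-/

namespace PP

variable {R : Type*} [CommRing R] (q : R)

@[simp] lemma gbinom_zero_right (n : ℕ) : gbinom q n 0 = 1 := by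
  cases n <;> rfl

lemma gbinom_succ_succ (n k : ℕ) :
    gbinom q (n + 1) (k + 1) = gbinom q n k + q ^ (k + 1) * gbinom q n (k + 1) := rfl

lemma gbinom_eq_zero_of_lt {n k : ℕ} (h : n < k) : gbinom q n k = 0 := by
  induction n generalizing k with
  | zero => obtain ⟨k, rfl⟩ := Nat.exists_eq_add_one_of_ne_zero h.ne'; rfl
  | succ n ih =>
    obtain ⟨k, rfl⟩ := Nat.exists_eq_add_one_of_ne_zero (Nat.ne_zero_of_lt h)
    rw [gbinom_succ_succ, ih (by omega), ih (by omega), mul_zero, add_zero]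

end PP

open Finset

@[simp] lemma Fin.not_last_lt_castSucc {r : ℕ} (i : Fin r) : ¬ Fin.last r < i.castSucc :=
  (Fin.castSucc_lt_last i).asymm

lemma Fin.card_filter_univ_castSucc {r : ℕ} (P : Fin (r + 1) → Prop) [DecidablePred P] :
    #{i | P i} = #{i : Fin r | P i.castSucc} + if P (Fin.last r) then 1 else 0 := by
  simp only [card_filter, Fin.sum_univ_castSucc]

lemma Fin.card_filter_univ_prod_castSucc {r : ℕ} {α : Type*} [Fintype α]
    (P : Fin (r + 1) × α → Prop) [DecidablePred P] :
    #{p | P p} = #{p : Fin r × α | P (p.1.castSucc, p.2)} + #{b | P (Fin.last r, b)} := by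
  simp only [card_filter, Fintype.sum_prod_type, Fin.sum_univ_castSucc]

lemma Finset.card_rows_eq_card_cols {α β : Type*} [Fintype α] [Fintype β] [DecidableEq α]
    [DecidableEq β] (R : α → β → Prop) [DecidableRel R]
    (hrow : ∀ a b b', R a b → R a b' → b = b') (hcol : ∀ a a' b, R a b → R a' b → a = a') :
    #{a | ∃ b, R a b} = #{b | ∃ a, R a b} := by
  have hfst : #{p : α × β | R p.1 p.2} = #{a | ∃ b, R a b} := by
    rw [← card_image_of_injOn (f := Prod.fst)]
    · congr 1; ext a; simp
    · exact fun p hp p' hp' h => Prod.ext h (hrow _ _ _ (by simpa using hp) (by simp_all))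
  have hsnd : #{p : α × β | R p.1 p.2} = #{b | ∃ a, R a b} := by
    rw [← card_image_of_injOn (f := Prod.snd)]
    · congr 1; ext a; simp
    · exact fun p hp p' hp' h => Prod.ext (hcol _ _ _ (by simpa using hp) (by simp_all)) h
  rw [← hfst, hsnd]

lemma Finset.sum_card_filter_lt {α M : Type*} [LinearOrder α] [AddCommMonoid M] (s : Finset α)
    (f : ℕ → M) : ∑ x ∈ s, f #{y ∈ s | y < x} = ∑ i ∈ range #s, f i := by
  induction s using Finset.induction_on_max with
  | empty => simp
  | insert a s has ih =>
    have ha : a ∉ s := fun h => lt_irrefl a (has a h)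
    rw [sum_insert ha, card_insert_of_notMem ha, sum_range_succ, ← ih, add_comm]
    congr 1
    · refine sum_congr rfl fun x hx => ?_
      rw [filter_insert, if_neg (has x hx).asymm]
    · rw [filter_insert, if_neg (lt_irrefl a), filter_true_of_mem has]

namespace PartialPerm

section Statistics

variable {r n : ℕ}

def isPP (M : Fin r → Fin n → Bool) : Prop :=
  (∀ i j j', M i j = true → M i j' = true → j = j') ∧
  (∀ i i' j, M i j = true → M i' j = true → i = i')

def zeroRows (M : Fin r → Fin n → Bool) : ℕ :=
  (Finset.univ.filter (fun i : Fin r => ∀ j, M i j = false)).card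

def invStat (M : Fin r → Fin n → Bool) : ℕ :=
  (Finset.univ.filter (fun p : Fin r × Fin n =>
    M p.1 p.2 = false ∧ (∀ j' < p.2, M p.1 j' = false) ∧ (∀ i' < p.1, M i' p.2 = false) ∧
    ((∃ j', M p.1 j' = true) ∨ (∃ i', M i' p.2 = true)))).card

def rlminStat (M : Fin r → Fin n → Bool) : ℕ :=
  (Finset.univ.filter (fun p : Fin r × Fin n =>
    M p.1 p.2 = true ∧ ∀ l < p.2, ∃ i' < p.1, M i' l = true)).card

def freeCols (M : Fin r → Fin n → Bool) : Finset (Fin n) :=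
  {c | ∀ i, M i c = false}

@[simp] lemma mem_freeCols {M : Fin r → Fin n → Bool} {c : Fin n} :
    c ∈ freeCols M ↔ ∀ i, M i c = false := by
  simp [freeCols]

lemma card_freeCols {M : Fin r → Fin n → Bool} (h : isPP M) :
    #(freeCols M) = n - (r - zeroRows M) := by
  have hrows := card_filter_add_card_filter_not (s := univ) fun i : Fin r => ∀ j, M i j = false
  have hcols := card_filter_add_card_filter_not (s := univ) fun j : Fin n => ∀ i, M i j = false
  have hcard : #{i | ¬ ∀ j, M i j = false} = #{j | ¬ ∀ i, M i j = false} := by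
    convert card_rows_eq_card_cols (fun i j => M i j = true) h.1 h.2 using 3 <;> simp
  rw [card_univ, Fintype.card_fin] at hrows hcols
  rw [zeroRows, freeCols]
  omega

def rowOf (o : Option (Fin n)) (j : Fin n) : Bool := o = some j

@[simp] lemma rowOf_none (j : Fin n) : rowOf none j = false := by simp [rowOf]

@[simp] lemma rowOf_some (c j : Fin n) : rowOf (some c) j = decide (c = j) := by simp [rowOf]

lemma rowOf_injective : Function.Injective (rowOf (n := n)) := by
  rintro (_ | c) (_ | c') h <;> have := congrFun h <;> simp_all

def addRow (M : Fin r → Fin n → Bool) (v : Fin n → Bool) : Fin (r + 1) → Fin n → Bool :=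
  Fin.snoc M v

@[simp] lemma addRow_castSucc (M : Fin r → Fin n → Bool) (v : Fin n → Bool) (i : Fin r) :
    addRow M v i.castSucc = M i := Fin.snoc_castSucc ..

@[simp] lemma addRow_last (M : Fin r → Fin n → Bool) (v : Fin n → Bool) :
    addRow M v (Fin.last r) = v := Fin.snoc_last ..

lemma exists_rowOf_of_isPP_addRow {M : Fin r → Fin n → Bool} {v : Fin n → Bool}
    (h : isPP (addRow M v)) : ∃ o, rowOf o = v := by
  by_cases hv : ∃ c, v c = true
  · obtain ⟨c, hc⟩ := hv
    refine ⟨some c, funext fun j => ?_⟩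
    have := h.1 (Fin.last r) c j
    by_cases hcj : c = j <;> simp_all
  · exact ⟨none, funext fun j => by simp_all⟩

variable (M : Fin r → Fin n → Bool)

lemma isPP_addRow_none : isPP (addRow M (rowOf none)) ↔ isPP M := by
  simp [isPP, Fin.forall_fin_succ']

lemma zeroRows_addRow_none : zeroRows (addRow M (rowOf none)) = zeroRows M + 1 := by
  simp [zeroRows, Fin.card_filter_univ_castSucc]

lemma invStat_addRow_none : invStat (addRow M (rowOf none)) = invStat M := by
  rw [invStat, Fin.card_filter_univ_prod_castSucc]
  simp only [addRow_castSucc, Fin.forall_fin_succ', Fin.castSucc_lt_castSucc_iff,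
    Fin.not_last_lt_castSucc, addRow_last, rowOf_none, implies_true, and_true,
    Fin.exists_fin_succ', Bool.false_eq_true, or_false, Fin.castSucc_lt_last, forall_const,
    lt_self_iff_false, exists_false, false_or, true_and]
  convert add_zero (invStat M) using 2
  · rfl
  · rw [card_eq_zero, filter_eq_empty_iff]
    rintro b - ⟨hfree, i, hi⟩
    simp [hfree i] at hi

lemma rlminStat_addRow_none : rlminStat (addRow M (rowOf none)) = rlminStat M := by
  rw [rlminStat, Fin.card_filter_univ_prod_castSucc]
  simp [rlminStat, Fin.exists_fin_succ']

lemma isPP_addRow_some (c : Fin n) :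
    isPP (addRow M (rowOf (some c))) ↔ isPP M ∧ c ∈ freeCols M := by
  simp only [isPP, Fin.forall_fin_succ', addRow_castSucc, addRow_last, rowOf_some,
    decide_eq_true_eq, forall_apply_eq_imp_iff, forall_eq', and_true, Fin.castSucc_inj,
    Fin.castSucc_ne_last, imp_false, (Fin.castSucc_lt_last _).ne', Bool.not_eq_true,
    implies_true, mem_freeCols]
  constructor
  · rintro ⟨hrow, hcol, hc⟩
    exact ⟨⟨hrow, fun i => (hcol i).1⟩, hc⟩
  · rintro ⟨⟨hrow, hcol⟩, hc⟩
    exact ⟨hrow, fun i => ⟨hcol i, fun j hj hcj => by simp_all⟩, hc⟩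

lemma zeroRows_addRow_some (c : Fin n) : zeroRows (addRow M (rowOf (some c))) = zeroRows M := by
  simp [zeroRows, Fin.card_filter_univ_castSucc]

lemma rlminStat_addRow_some (c : Fin n) :
    rlminStat (addRow M (rowOf (some c))) =
      rlminStat M + if #{b ∈ freeCols M | b < c} = 0 then 1 else 0 := by
  rw [rlminStat, Fin.card_filter_univ_prod_castSucc]
  simp only [addRow_castSucc, Fin.exists_fin_succ', Fin.castSucc_lt_castSucc_iff,
    Fin.not_last_lt_castSucc, addRow_last, rowOf_some, decide_eq_true_eq, false_and, or_false,
    Fin.castSucc_lt_last, true_and, lt_self_iff_false, card_eq_zero, filter_eq_empty_iff,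
    mem_freeCols, not_lt]
  congr 1
  rw [card_filter]
  simp only [ite_and, sum_ite_eq, mem_univ, if_true]
  refine if_congr ⟨fun h x hx => not_lt.1 fun hxc => ?_, fun h l hl => ?_⟩ rfl rfl
  · obtain ⟨i, hi⟩ := h x hxc
    simp [hx i] at hi
  · by_contra hno
    exact (h (by simpa using hno)).not_gt hl

lemma invStat_addRow_some {c : Fin n} (hc : c ∈ freeCols M) :
    invStat (addRow M (rowOf (some c))) =
      invStat M + zeroRows M + #{b ∈ freeCols M | b < c} := by
  rw [mem_freeCols] at hc
  have hzero : zeroRows M = #(({i | ∀ j, M i j = false} : Finset (Fin r)) ×ˢ {c}) := by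
    simp [zeroRows]
  rw [invStat, Fin.card_filter_univ_prod_castSucc]
  simp only [addRow_castSucc, Fin.forall_fin_succ', Fin.castSucc_lt_castSucc_iff,
    Fin.not_last_lt_castSucc, addRow_last, rowOf_some, decide_eq_false_iff_not,
    IsEmpty.forall_iff, and_true, Fin.exists_fin_succ', decide_eq_true_eq, Fin.castSucc_lt_last,
    forall_const, lt_self_iff_false, exists_eq', true_or]
  congr 1
  · rw [invStat, hzero, ← card_union_of_disjoint]
    · congr 1
      ext ⟨i, b⟩
      rcases eq_or_ne c b with rfl | hbc
      · by_cases hz : ∀ j, M i j = false <;> simp_all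
      · simp [hbc]
    · refine disjoint_left.2 fun ⟨i, b⟩ h1 h2 => ?_
      simp only [mem_filter, mem_univ, true_and, mem_product, mem_singleton] at h1 h2
      obtain ⟨hz, rfl⟩ := h2
      obtain ⟨j, hj⟩ | ⟨i', hi'⟩ := h1.2.2.2
      · simp [hz j] at hj
      · simp [hc i'] at hi'
  · congr 1
    ext b
    simp only [mem_filter, mem_univ, true_and, mem_freeCols]
    refine ⟨fun ⟨hne, hleft, hb⟩ =>
      ⟨hb, lt_of_le_of_ne (not_lt.1 fun h => hleft c h rfl) (Ne.symm hne)⟩,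
      fun ⟨hb, hbc⟩ => ⟨hbc.ne', fun j hj hcj => ?_, hb⟩⟩
    subst hcj
    exact lt_asymm hj hbc

end Statistics

section GeneratingFunction

variable {R : Type*} [CommRing R] (w q : R) {r n : ℕ}

def wqNumber (m : ℕ) : R := ∑ i ∈ range m, if i = 0 then w else q ^ i

def weight (M : Fin r → Fin n → Bool) : R := w ^ rlminStat M * q ^ invStat M

open scoped Classical in
noncomputable def genFun (r n k : ℕ) : R :=
  ∑ M : Fin r → Fin n → Bool, if isPP M ∧ zeroRows M = k then weight w q M else 0

lemma weight_addRow_none (M : Fin r → Fin n → Bool) :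
    weight w q (addRow M (rowOf none)) = weight w q M := by
  rw [weight, weight, rlminStat_addRow_none, invStat_addRow_none]

lemma weight_addRow_some {M : Fin r → Fin n → Bool} {c : Fin n} (hc : c ∈ freeCols M) :
    weight w q (addRow M (rowOf (some c))) = q ^ zeroRows M *
      (if #{b ∈ freeCols M | b < c} = 0 then w else q ^ #{b ∈ freeCols M | b < c}) *
        weight w q M := by
  rw [weight, weight, rlminStat_addRow_some, invStat_addRow_some M hc]
  split_ifs with h0
  · rw [h0]; ring
  · ring

lemma sum_weight_addRow_some {M : Fin r → Fin n → Bool} (h : isPP M) :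
    ∑ c ∈ freeCols M, weight w q (addRow M (rowOf (some c))) =
      q ^ zeroRows M * wqNumber w q (n - (r - zeroRows M)) * weight w q M := by
  rw [sum_congr rfl fun c hc => weight_addRow_some w q hc, ← sum_mul, ← mul_sum,
    sum_card_filter_lt (freeCols M) fun i => if i = 0 then w else q ^ i, card_freeCols h,
    wqNumber]

lemma sum_addRow (f : (Fin (r + 1) → Fin n → Bool) → R) (hf : ∀ M, ¬ isPP M → f M = 0) :
    ∑ M, f M = ∑ M : Fin r → Fin n → Bool, ∑ o : Option (Fin n), f (addRow M (rowOf o)) := by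
  rw [← (Fin.snocEquiv fun _ => Fin n → Bool).sum_comp, Fintype.sum_prod_type, sum_comm]
  refine sum_congr rfl fun M _ =>
    (sum_of_injOn rowOf rowOf_injective.injOn (by simp) (fun v _ hv => ?_) fun o _ => rfl).symm
  exact hf _ fun h => hv (by simpa using exists_rowOf_of_isPP_addRow h)

open scoped Classical in
lemma genFun_succ (r n k : ℕ) : genFun w q (r + 1) n k =
    (∑ M : Fin r → Fin n → Bool, if isPP M ∧ zeroRows M + 1 = k then weight w q M else 0) +
      q ^ k * wqNumber w q (n - (r - k)) * genFun w q r n k := by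
  rw [genFun, sum_addRow _ fun M h => if_neg fun h' => h h'.1, genFun, mul_sum,
    ← sum_add_distrib]
  refine sum_congr rfl fun M _ => ?_
  rw [Fintype.sum_option, isPP_addRow_none, zeroRows_addRow_none, weight_addRow_none]
  congr 1
  simp only [isPP_addRow_some, zeroRows_addRow_some, and_right_comm (b := _ ∈ freeCols M)]
  by_cases h : isPP M ∧ zeroRows M = k
  · simp only [h, true_and, if_true]
    rw [← sum_filter, filter_mem_eq_inter, univ_inter, sum_weight_addRow_some w q h.1, h.2]
  · simp only [h, false_and, if_false, sum_const_zero, mul_zero]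

lemma genFun_zero (n k : ℕ) : genFun w q 0 n k = if k = 0 then 1 else 0 := by
  simp [genFun, isPP, zeroRows, weight, rlminStat, invStat, eq_comm (a := k)]

lemma genFun_succ_zero (r n : ℕ) :
    genFun w q (r + 1) n 0 = wqNumber w q (n - r) * genFun w q r n 0 := by
  simp [genFun_succ]

open scoped Classical in
lemma genFun_succ_succ (r n k : ℕ) : genFun w q (r + 1) n (k + 1) = genFun w q r n k +
    q ^ (k + 1) * wqNumber w q (n - (r - (k + 1))) * genFun w q r n (k + 1) := by
  rw [genFun_succ]
  simp only [genFun, add_left_inj]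

theorem genFun_eq (r n k : ℕ) :
    genFun w q r n k = PP.gbinom q r k * ∏ i ∈ range (r - k), wqNumber w q (n - i) := by
  induction r generalizing k with
  | zero => cases k <;> simp [genFun_zero, PP.gbinom]
  | succ r ih =>
    cases k with
    | zero =>
      simp only [genFun_succ_zero, ih, PP.gbinom_zero_right, Nat.sub_zero, prod_range_succ]
      ring
    | succ k =>
      rw [genFun_succ_succ, ih, ih, PP.gbinom_succ_succ, Nat.add_sub_add_right]
      rcases Nat.lt_or_ge r (k + 1) with hr | hr
      · rw [PP.gbinom_eq_zero_of_lt q hr]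
        ring
      · rw [show r - k = r - (k + 1) + 1 by omega, prod_range_succ]
        ring

end GeneratingFunction

end PartialPerm

lemma wqNum_eq_wqNumber (m : ℕ) : wqNum m = PartialPerm.wqNumber w4 q4 m := by
  cases m with
  | zero => simp [wqNum, PartialPerm.wqNumber]
  | succ m =>
    simp [wqNum, PartialPerm.wqNumber, sum_range_succ', sum_Ico_eq_sum_range, add_comm]

open scoped Classical in
theorem stmt4 (n k : ℕ) :
    (∑ M : Fin n → Fin n → Bool,
        if PP.isPP M ∧ PP.zeroRows M = k then w4 ^ PP.rlminStat M * q4 ^ PP.invStat M else 0)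
    = PP.gbinom q4 n k * ∏ m ∈ Finset.Ico (k+1) (n+1), wqNum m := by
  change PartialPerm.genFun w4 q4 n n k = _
  rw [PartialPerm.genFun_eq]
  rcases le_or_gt k n with hk | hk
  · rw [range_eq_Ico, prod_Ico_reflect _ _ (by omega : n - k ≤ n + 1),
      show n + 1 - (n - k) = k + 1 by omega, Nat.sub_zero]
    simp_rw [wqNum_eq_wqNumber]
  · rw [PP.gbinom_eq_zero_of_lt q4 hk, zero_mul, zero_mul]
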